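/- arXiv:1002.3457 — 7 statements merged into one kernel-verified Lean document; each statement's English description precedes it below -/
import Mathlib

section
/- Let A be the Cartan matrix of the affine Lie algebra C_ℓ^{(1)} (ℓ ≥ 2): the (ℓ+1)×(ℓ+1) tridiagonal matrix with diagonal entries 2, entries a_{i,i+1} = -1 for 0 ≤ i ≤ ℓ-1 except a_{0,1} handled below, and subdiagonal/superdiagonal given by a_{10} = -2, a_{ℓ-1,ℓ} = -2, and all other off-diagonal neighbor entries -1. A vector ψ ∈ ℤ^{ℓ+1} satisfying ψ_0 + ψ_1 + ⋯ + ψ_ℓ = 0 lies in the ℤ-span of the columns of A if and only if the sum of the even-indexed coordinates ψ_0 + ψ_2 + ψ_4 + ⋯ is even. -/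
/-!
Let `∂` be the oriented incidence matrix of the path `0 — 1 — ⋯ — ℓ` (rows `e_k - e_{k+1}`) and
`D = diag(2, 1, …, 1, 2)`. The Cartan matrix of `C_ℓ^{(1)}` factors as `A = ∂ᵀ ∂ D`: the path
Laplacian with its two end columns doubled.

Every edge `{k, k + 1}` has exactly one even endpoint, so the even-indexed coordinates of `∂ᵀ g`
sum to `∑ g` mod 2, and `∑ ∂ y = y₀ - y_ℓ` telescopes; for `y = D x` this is `2 x₀ - 2 x_ℓ`.
Conversely, a level-zero `ψ` is `∂ᵀ g` for the partial sums `g` of `ψ`, and `g = ∂ y` with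
`y₀ = 0`, `y_ℓ = -∑ g`; the parity condition makes `y_ℓ` even, so `y = D x`.
-/

open Matrix Finset

def pathIncidence (n : ℕ) : Matrix (Fin n) (Fin (n + 1)) ℤ :=
  Matrix.of fun k => Pi.single k.castSucc 1 - Pi.single k.succ 1

theorem pathIncidence_apply {n : ℕ} (k : Fin n) (i : Fin (n + 1)) :
    pathIncidence n k i = (if (i : ℕ) = k then 1 else 0) - (if (i : ℕ) = k + 1 then 1 else 0) := by
  simp [pathIncidence, Pi.single_apply, Fin.ext_iff]

theorem pathIncidence_mulVec_apply {n : ℕ} (y : Fin (n + 1) → ℤ) (k : Fin n) :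
    (pathIncidence n *ᵥ y) k = y k.castSucc - y k.succ := by
  change (Pi.single k.castSucc 1 - Pi.single k.succ 1) ⬝ᵥ y = _
  rw [sub_dotProduct, single_dotProduct, single_dotProduct, one_mul, one_mul]

theorem sum_pathIncidence_mulVec {n : ℕ} (y : Fin (n + 1) → ℤ) :
    ∑ k, (pathIncidence n *ᵥ y) k = y 0 - y (Fin.last n) := by
  simp only [pathIncidence_mulVec_apply]
  induction n with
  | zero => simp
  | succ n ih =>
    rw [Fin.sum_univ_castSucc]
    have htail := ih (fun i => y i.castSucc)
    simp only [Fin.succ_castSucc] at htail ⊢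
    rw [htail]
    simp

theorem vecMul_pathIncidence_apply {n : ℕ} (G : ℕ → ℤ) (i : Fin (n + 1)) :
    ((fun k : Fin n => G k) ᵥ* pathIncidence n) i =
      (if (i : ℕ) < n then G i else 0) - (if 0 < (i : ℕ) then G (i - 1) else 0) := by
  simp only [vecMul, dotProduct, pathIncidence_apply]
  rw [Fin.sum_univ_eq_sum_range
    (fun k => G k * ((if (i : ℕ) = k then 1 else 0) - if (i : ℕ) = k + 1 then 1 else 0))]
  obtain ⟨i, hi⟩ := i
  simp only [mul_sub, mul_ite, mul_one, mul_zero, sum_sub_distrib, sum_ite_eq, mem_range]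
  cases i with
  | zero => simp
  | succ m =>
    simp only [Nat.add_right_cancel_iff, sum_ite_eq, mem_range, Nat.succ_pos, if_true,
      add_tsub_cancel_right]
    split_ifs <;> omega

theorem sum_even_vecMul_pathIncidence_modEq {n : ℕ} (g : Fin n → ℤ) :
    ∑ i ∈ univ.filter (fun i : Fin (n + 1) => (i : ℕ) % 2 = 0), (g ᵥ* pathIncidence n) i ≡
      ∑ k, g k [ZMOD 2] := by
  have hrow : ∀ k : Fin n,
      ∑ i ∈ univ.filter (fun i : Fin (n + 1) => (i : ℕ) % 2 = 0), pathIncidence n k i ≡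
        1 [ZMOD 2] := by
    intro k
    simp only [pathIncidence, of_apply, Pi.sub_apply, sum_sub_distrib, sum_pi_single',
      mem_filter, mem_univ, true_and, Fin.val_castSucc, Fin.val_succ]
    split_ifs <;> first | omega | decide
  simp only [vecMul_eq_sum, Finset.sum_apply, Pi.smul_apply, smul_eq_mul]
  rw [sum_comm]
  refine Int.ModEq.sum fun k _ => ?_
  rw [← mul_sum]
  simpa using (hrow k).mul_left (g k)

theorem exists_vecMul_pathIncidence_eq {n : ℕ} (ψ : Fin (n + 1) → ℤ) (hψ : ∑ i, ψ i = 0) :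
    ∃ g : Fin n → ℤ, g ᵥ* pathIncidence n = ψ := by
  set G : ℕ → ℤ := fun m => ∑ j : Fin (n + 1), if (j : ℕ) ≤ m then ψ j else 0
  have hG_last : G n = 0 := by
    simp only [G, Fin.is_le, if_true, hψ]
  have hG_sub : ∀ i : Fin (n + 1), G i - (if 0 < (i : ℕ) then G (i - 1) else 0) = ψ i := by
    intro i
    split_ifs with hi
    · simp only [G, ← sum_sub_distrib]
      rw [sum_eq_single i (fun j _ hj => ?_) (by simp)]
      · rw [if_pos le_rfl, if_neg (by omega), sub_zero]
      · have := Fin.val_ne_of_ne hj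
        split_ifs <;> omega
    · simp only [G, sub_zero]
      rw [sum_eq_single i (fun j _ hj => ?_) (by simp)]
      · rw [if_pos le_rfl]
      · have := Fin.val_ne_of_ne hj
        split_ifs <;> omega
  refine ⟨fun k => G k, funext fun i => ?_⟩
  rw [vecMul_pathIncidence_apply, ← hG_sub i]
  congr 1
  split_ifs with h
  · rfl
  · rw [show (i : ℕ) = n by omega, hG_last]

theorem exists_pathIncidence_mulVec_eq {n : ℕ} (g : Fin n → ℤ) :
    ∃ y, pathIncidence n *ᵥ y = g ∧ y 0 = 0 :=
  ⟨-Fin.partialSum g, funext fun k => by simp [pathIncidence_mulVec_apply, Fin.partialSum_succ],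
    by simp⟩

def doubledEnds (n : ℕ) (i : Fin (n + 1)) : ℤ :=
  if (i : ℕ) = 0 ∨ (i : ℕ) = n then 2 else 1

def affineCartanC (n : ℕ) : Matrix (Fin (n + 1)) (Fin (n + 1)) ℤ :=
  (pathIncidence n)ᵀ * pathIncidence n * diagonal (doubledEnds n)

theorem affineCartanC_apply {n : ℕ} (hn : 0 < n) (i j : Fin (n + 1)) :
    affineCartanC n i j =
      if i = j then 2
      else if i.val = 1 ∧ j.val = 0 then -2
      else if i.val = n - 1 ∧ j.val = n then -2
      else if i.val + 1 = j.val ∨ j.val + 1 = i.val then -1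
      else 0 := by
  set column : ℕ → ℤ := fun k => (if (i : ℕ) = k then 1 else 0) - (if (i : ℕ) = k + 1 then 1 else 0)
  have hlap : ((pathIncidence n)ᵀ * pathIncidence n) i j =
      ((fun k : Fin n => column k) ᵥ* pathIncidence n) j := by
    simp only [mul_apply, transpose_apply, vecMul, dotProduct, pathIncidence_apply, column]
  rw [affineCartanC, mul_diagonal, hlap, vecMul_pathIncidence_apply, doubledEnds]
  have := i.isLt
  have := j.isLt
  simp only [column, Fin.ext_iff]
  split_ifs <;> omega

theorem exists_affineCartanC_mulVec_eq_iff {n : ℕ} (ψ : Fin (n + 1) → ℤ) (hψ : ∑ i, ψ i = 0) :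
    (∃ x, affineCartanC n *ᵥ x = ψ) ↔
      2 ∣ ∑ i ∈ univ.filter (fun i : Fin (n + 1) => (i : ℕ) % 2 = 0), ψ i := by
  simp only [affineCartanC, ← mulVec_mulVec, mulVec_transpose]
  constructor
  · rintro ⟨x, rfl⟩
    rw [← Int.modEq_zero_iff_dvd]
    refine (sum_even_vecMul_pathIncidence_modEq _).trans (Int.modEq_zero_iff_dvd.mpr ?_)
    rw [sum_pathIncidence_mulVec, mulVec_diagonal, mulVec_diagonal]
    simp only [doubledEnds, Fin.val_zero, Fin.val_last, true_or, or_true, if_true, ← mul_sub]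
    exact dvd_mul_right 2 _
  · intro heven
    obtain ⟨g, rfl⟩ := exists_vecMul_pathIncidence_eq ψ hψ
    obtain ⟨y, rfl, hy0⟩ := exists_pathIncidence_mulVec_eq g
    have hlast : 2 ∣ y (Fin.last n) := by
      have hsum := (sum_even_vecMul_pathIncidence_modEq _).symm.trans
        (Int.modEq_zero_iff_dvd.mpr heven)
      rwa [sum_pathIncidence_mulVec, hy0, zero_sub, Int.modEq_zero_iff_dvd, dvd_neg] at hsum
    have hdvd : ∀ i, doubledEnds n i ∣ y i := by
      intro i
      unfold doubledEnds
      split_ifs with h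
      · rcases h with h | h
        · rw [show i = 0 from Fin.ext h, hy0]
          exact dvd_zero 2
        · rwa [show i = Fin.last n from Fin.ext h]
      · exact one_dvd _
    refine ⟨fun i => y i / doubledEnds n i, ?_⟩
    congr 2
    ext i
    rw [mulVec_diagonal, Int.mul_ediv_cancel' (hdvd i)]

/-- Stmt 1: In type `C_ℓ^{(1)}` (ℓ ≥ 2), a level-zero vector ψ lies in the ℤ-column-span of
the Cartan matrix iff the sum of its even-indexed coordinates is even. -/
theorem stmt1 (ℓ : ℕ) (hℓ : 2 ≤ ℓ)
    (A : Matrix (Fin (ℓ + 1)) (Fin (ℓ + 1)) ℤ)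
    (hA : ∀ i j : Fin (ℓ + 1), A i j =
      if i = j then 2
      else if i.val = 1 ∧ j.val = 0 then -2
      else if i.val = ℓ - 1 ∧ j.val = ℓ then -2
      else if i.val + 1 = j.val ∨ j.val + 1 = i.val then -1
      else 0)
    (ψ : Fin (ℓ + 1) → ℤ) (hψ : ∑ i, ψ i = 0) :
    (∃ x : Fin (ℓ + 1) → ℤ, A.mulVec x = ψ) ↔
      2 ∣ ∑ i ∈ Finset.univ.filter (fun i : Fin (ℓ + 1) => i.val % 2 = 0), ψ i := by
  obtain rfl : A = affineCartanC ℓ :=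
    Matrix.ext fun i j => by rw [hA, affineCartanC_apply (by omega)]
  exact exists_affineCartanC_mulVec_eq_iff ψ hψ
end

section
/- Let A be the Cartan matrix of the affine Lie algebra D_{ℓ+1}^{(2)} (ℓ ≥ 2): the (ℓ+1)×(ℓ+1) tridiagonal matrix with diagonal 2, a_{01} = -2, a_{ℓ,ℓ-1} = -2, and all other neighboring off-diagonal entries -1. A vector ψ ∈ ℤ^{ℓ+1} satisfying ψ_0 + 2(ψ_1 + ⋯ + ψ_{ℓ-1}) + ψ_ℓ = 0 lies in the ℤ-span of the columns of A if and only if ψ_0 is even. -/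
/-!
Row 0 of the Cartan matrix has only even entries, which gives necessity. Conversely, write
`ψ₀ = 2c` and look for `x` through its first differences `dₙ = xₙ₊₁ - xₙ`: rows `0, …, ℓ - 1`
of `A x = ψ` say exactly `d₀ = -c` and `dₙ = dₙ₋₁ - ψₙ`, so `d_{ℓ-1} = -c - (ψ₁ + ⋯ + ψ_{ℓ-1})`,
and the last row `2 d_{ℓ-1} = ψ_ℓ` is then the level-zero condition.
-/

open Finset Matrix

theorem sum_filter_zero_lt_lt_eq_sum_range {M : Type*} [AddCommMonoid M] (ℓ : ℕ) (f : ℕ → M) :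
    ∑ i ∈ univ.filter (fun i : Fin (ℓ + 1) => 0 < i.val ∧ i.val < ℓ), f i =
      ∑ k ∈ range (ℓ - 1), f (k + 1) := by
  rw [sum_filter, Fin.sum_univ_eq_sum_range (fun n => if 0 < n ∧ n < ℓ then f n else 0),
    ← sum_filter]
  have hIco : (range (ℓ + 1)).filter (fun n => 0 < n ∧ n < ℓ) = Ico 1 ℓ := by
    ext n; simp only [mem_filter, mem_range, mem_Ico]; omega
  rw [hIco, sum_Ico_eq_sum_range]
  simp only [add_comm 1]

/-- Indexed by `ℕ` so that a row of `affineCartanD2 ℓ` applied to `fun j => y j`, `y : ℕ → ℤ`,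
is a sum over `range`. -/
def affineCartanD2Entry (ℓ i j : ℕ) : ℤ :=
  if i = j then 2
  else if i = 0 ∧ j = 1 then -2
  else if i = ℓ ∧ j = ℓ - 1 then -2
  else if i + 1 = j ∨ j + 1 = i then -1
  else 0

theorem affineCartanD2Entry_self (ℓ i : ℕ) : affineCartanD2Entry ℓ i i = 2 :=
  if_pos rfl

theorem affineCartanD2Entry_eq_zero {ℓ i j : ℕ} (h : i + 1 < j ∨ j + 1 < i) :
    affineCartanD2Entry ℓ i j = 0 := by
  unfold affineCartanD2Entry
  split_ifs <;> omega

theorem two_dvd_affineCartanD2Entry_zero (ℓ j : ℕ) : 2 ∣ affineCartanD2Entry ℓ 0 j := by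
  unfold affineCartanD2Entry
  split_ifs <;> simp_all

def affineCartanD2 (ℓ : ℕ) : Matrix (Fin (ℓ + 1)) (Fin (ℓ + 1)) ℤ :=
  Matrix.of fun i j => affineCartanD2Entry ℓ i j

namespace affineCartanD2

variable {ℓ : ℕ}

theorem two_dvd_mulVec_apply_zero (x : Fin (ℓ + 1) → ℤ) : 2 ∣ (affineCartanD2 ℓ *ᵥ x) 0 :=
  show 2 ∣ ∑ j : Fin (ℓ + 1), affineCartanD2Entry ℓ 0 j * x j from
    dvd_sum fun (j : Fin (ℓ + 1)) _ => (two_dvd_affineCartanD2Entry_zero ℓ j).mul_right (x j)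

theorem mulVec_apply_eq_sum (y : ℕ → ℤ) (i : Fin (ℓ + 1)) {s : Finset ℕ}
    (hs : s ⊆ range (ℓ + 1)) (hband : ∀ j ∉ s, j ≤ ℓ → i + 1 < j ∨ j + 1 < i) :
    (affineCartanD2 ℓ *ᵥ fun j => y j) i = ∑ j ∈ s, affineCartanD2Entry ℓ i j * y j := by
  rw [sum_subset hs fun j hj hjs => ?_]
  · exact Fin.sum_univ_eq_sum_range (fun j => affineCartanD2Entry ℓ i j * y j) (ℓ + 1)
  · rw [affineCartanD2Entry_eq_zero (hband j hjs (by simpa [Nat.lt_succ_iff] using hj)), zero_mul]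

theorem mulVec_apply_zero (hℓ : 1 ≤ ℓ) (y : ℕ → ℤ) :
    (affineCartanD2 ℓ *ᵥ fun j => y j) 0 = 2 * y 0 - 2 * y 1 := by
  have h_right : affineCartanD2Entry ℓ 0 1 = -2 := by simp [affineCartanD2Entry]
  rw [mulVec_apply_eq_sum y 0 (s := {0, 1}) (by simp [insert_subset_iff]; omega)
    (by simp; omega), sum_pair zero_ne_one, Fin.val_zero, affineCartanD2Entry_self, h_right]
  ring

theorem mulVec_apply_succ {m : ℕ} (hm : m + 2 ≤ ℓ) (y : ℕ → ℤ) :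
    (affineCartanD2 ℓ *ᵥ fun j => y j) ⟨m + 1, by omega⟩ = 2 * y (m + 1) - y m - y (m + 2) := by
  have h_left : affineCartanD2Entry ℓ (m + 1) m = -1 := by
    simp [affineCartanD2Entry, show m + 1 ≠ ℓ by omega]
  have h_right : affineCartanD2Entry ℓ (m + 1) (m + 2) = -1 := by
    simp [affineCartanD2Entry, show m + 1 ≠ ℓ by omega]
  rw [mulVec_apply_eq_sum y _ (s := {m, m + 1, m + 2}) (by simp [insert_subset_iff]; omega)
    (by simp; omega), sum_insert (by simp), sum_pair (by simp), h_left,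
    affineCartanD2Entry_self, h_right]
  ring

theorem mulVec_apply_last (hℓ : 1 ≤ ℓ) (y : ℕ → ℤ) :
    (affineCartanD2 ℓ *ᵥ fun j => y j) (Fin.last ℓ) = 2 * y ℓ - 2 * y (ℓ - 1) := by
  have h_left : affineCartanD2Entry ℓ ℓ (ℓ - 1) = -2 := by
    simp [affineCartanD2Entry, show ℓ ≠ ℓ - 1 by omega]
  rw [mulVec_apply_eq_sum y _ (s := {ℓ - 1, ℓ}) (by simp [insert_subset_iff])
    (by simp; omega), sum_pair (by omega), Fin.val_last, h_left, affineCartanD2Entry_self]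
  ring

theorem exists_mulVec_eq (hℓ : 1 ≤ ℓ) (φ : ℕ → ℤ) {c : ℤ} (hc : φ 0 = 2 * c)
    (hφ : φ 0 + 2 * ∑ k ∈ range (ℓ - 1), φ (k + 1) + φ ℓ = 0) :
    ∃ y : ℕ → ℤ, ∀ i : Fin (ℓ + 1), (affineCartanD2 ℓ *ᵥ fun j => y j) i = φ i := by
  set d : ℕ → ℤ := fun n => -c - ∑ k ∈ range n, φ (k + 1) with hd
  have hd_succ (n : ℕ) : d (n + 1) = d n - φ (n + 1) := by
    simp only [hd, sum_range_succ]; ring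
  set y : ℕ → ℤ := fun n => ∑ k ∈ range n, d k
  have hy_succ (n : ℕ) : y (n + 1) - y n = d n := sum_range_succ_sub_sum d
  refine ⟨y, fun ⟨i, hi⟩ => ?_⟩
  rcases i with _ | m
  · rw [show (⟨0, hi⟩ : Fin (ℓ + 1)) = 0 from rfl, mulVec_apply_zero hℓ, Fin.val_zero]
    have hd0 : d 0 = -c := by simp [hd]
    linear_combination -2 * hy_succ 0 - 2 * hd0 - hc
  obtain hm | rfl : m + 2 ≤ ℓ ∨ m + 1 = ℓ := by omega
  · rw [mulVec_apply_succ hm]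
    linear_combination hy_succ m - hy_succ (m + 1) - hd_succ m
  · rw [show (⟨m + 1, hi⟩ : Fin (m + 1 + 1)) = Fin.last (m + 1) from rfl, mulVec_apply_last hℓ,
      Fin.val_last]
    simp only [Nat.add_sub_cancel] at hφ ⊢
    linear_combination 2 * hy_succ m - hφ + hc

end affineCartanD2

/-- Stmt 2: In type `D_{ℓ+1}^{(2)}` (ℓ ≥ 2), a level-zero vector ψ lies in the ℤ-column-span
of the Cartan matrix iff ψ₀ is even. -/
theorem stmt2 (ℓ : ℕ) (hℓ : 2 ≤ ℓ)
    (A : Matrix (Fin (ℓ + 1)) (Fin (ℓ + 1)) ℤ)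
    (hA : ∀ i j : Fin (ℓ + 1), A i j =
      if i = j then 2
      else if i.val = 0 ∧ j.val = 1 then -2
      else if i.val = ℓ ∧ j.val = ℓ - 1 then -2
      else if i.val + 1 = j.val ∨ j.val + 1 = i.val then -1
      else 0)
    (ψ : Fin (ℓ + 1) → ℤ)
    (hψ : ψ 0 + 2 * (∑ i ∈ Finset.univ.filter
        (fun i : Fin (ℓ + 1) => 0 < i.val ∧ i.val < ℓ), ψ i) + ψ (Fin.last ℓ) = 0) :
    (∃ x : Fin (ℓ + 1) → ℤ, A.mulVec x = ψ) ↔ 2 ∣ ψ 0 := by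
  obtain rfl : A = affineCartanD2 ℓ := Matrix.ext fun i j => by
    simp only [hA, affineCartanD2, Matrix.of_apply, affineCartanD2Entry, Fin.val_inj]
  obtain ⟨φ, rfl⟩ : ∃ φ : ℕ → ℤ, ψ = fun i : Fin (ℓ + 1) => φ i :=
    ⟨fun n => if h : n < ℓ + 1 then ψ ⟨n, h⟩ else 0, funext fun i => by simp [i.is_le]⟩
  rw [sum_filter_zero_lt_lt_eq_sum_range] at hψ
  refine ⟨fun ⟨x, hx⟩ => hx ▸ affineCartanD2.two_dvd_mulVec_apply_zero x, fun ⟨c, hc⟩ => ?_⟩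
  obtain ⟨y, hy⟩ := affineCartanD2.exists_mulVec_eq (by omega) φ hc hψ
  exact ⟨_, funext hy⟩
end

section
/- Let A be the Cartan matrix of the affine Lie algebra B_ℓ^{(1)} (ℓ ≥ 3), with rows/columns indexed 0,…,ℓ, entries: a_{ii}=2; a_{02}=a_{20}=a_{12}=a_{21}=-1; a_{i,i+1}=a_{i+1,i}=-1 for 2 ≤ i ≤ ℓ-2; a_{ℓ-1,ℓ}=-1 and a_{ℓ,ℓ-1}=-2; all other entries 0. A vector ψ ∈ ℤ^{ℓ+1} satisfying ψ_0 + ψ_1 + 2(ψ_2 + ⋯ + ψ_{ℓ-1}) + ψ_ℓ = 0 lies in the ℤ-span of the columns of A if and only if ψ_ℓ is even. -/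
def psi' (ℓ : ℕ) (ψ : Fin (ℓ + 1) → ℤ) (n : ℕ) : ℤ :=
  if h : n < ℓ + 1 then ψ ⟨n, h⟩ else 0

def xv (ℓ : ℕ) (ψ : Fin (ℓ + 1) → ℤ) (c : ℤ) (n : ℕ) : ℤ :=
  if n = 0 then psi' ℓ ψ 0
  else if n = 1 then -c - ∑ j ∈ Finset.Icc 2 (ℓ - 1), psi' ℓ ψ j
  else psi' ℓ ψ 0 + ((n : ℤ) - 2) * c
    + ∑ j ∈ Finset.Icc 3 (ℓ - 1), (((min n j : ℕ) : ℤ) - 2) * psi' ℓ ψ j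

lemma ind_sum {n : ℕ} (v : Fin n → ℤ) (p : ℕ) (hp : p < n) :
    ∑ j : Fin n, (if (j : ℕ) = p then v j else 0) = v ⟨p, hp⟩ := by
  rw [Finset.sum_eq_single ⟨p, hp⟩]
  · simp
  · intro b _ hb
    exact if_neg (by simpa [Fin.ext_iff] using hb)
  · simp

lemma filter_sum (ℓ : ℕ) (ψ : Fin (ℓ + 1) → ℤ) (a b : ℕ) (hb : b ≤ ℓ) :
    ∑ i ∈ Finset.univ.filter (fun i : Fin (ℓ + 1) => a ≤ i.val ∧ i.val ≤ b), ψ i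
      = ∑ j ∈ Finset.Icc a b, psi' ℓ ψ j := by
  rw [Finset.sum_filter]
  have h1 : ∀ i : Fin (ℓ + 1), (if a ≤ i.val ∧ i.val ≤ b then ψ i else 0)
      = (fun n => if a ≤ n ∧ n ≤ b then psi' ℓ ψ n else 0) i.val := by
    intro i
    simp only [psi', i.isLt, dif_pos, Fin.eta]
  simp_rw [h1]
  have h2 : (∑ x : Fin (ℓ + 1), (fun n => if a ≤ n ∧ n ≤ b then psi' ℓ ψ n else 0) (x : ℕ))
      = ∑ n ∈ Finset.range (ℓ + 1), (if a ≤ n ∧ n ≤ b then psi' ℓ ψ n else 0) :=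
    Fin.sum_univ_eq_sum_range (fun n => if a ≤ n ∧ n ≤ b then psi' ℓ ψ n else 0) (ℓ + 1)
  rw [h2, ← Finset.sum_filter]
  congr 1
  ext n
  simp only [Finset.mem_filter, Finset.mem_range, Finset.mem_Icc]
  omega

lemma xv_zero (ℓ : ℕ) (ψ : Fin (ℓ + 1) → ℤ) (c : ℤ) : xv ℓ ψ c 0 = psi' ℓ ψ 0 := by
  simp [xv]

lemma xv_one (ℓ : ℕ) (ψ : Fin (ℓ + 1) → ℤ) (c : ℤ) :
    xv ℓ ψ c 1 = -c - ∑ j ∈ Finset.Icc 2 (ℓ - 1), psi' ℓ ψ j := by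
  simp [xv]

lemma xv_ge (ℓ : ℕ) (ψ : Fin (ℓ + 1) → ℤ) (c : ℤ) (n : ℕ) (h : 2 ≤ n) :
    xv ℓ ψ c n = psi' ℓ ψ 0 + ((n : ℤ) - 2) * c
      + ∑ j ∈ Finset.Icc 3 (ℓ - 1), (((min n j : ℕ) : ℤ) - 2) * psi' ℓ ψ j := by
  rw [xv, if_neg (by omega), if_neg (by omega)]

lemma xv_two (ℓ : ℕ) (ψ : Fin (ℓ + 1) → ℤ) (c : ℤ) : xv ℓ ψ c 2 = psi' ℓ ψ 0 := by
  rw [xv_ge ℓ ψ c 2 le_rfl]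
  have h : ∑ j ∈ Finset.Icc 3 (ℓ - 1), (((min 2 j : ℕ) : ℤ) - 2) * psi' ℓ ψ j = 0 :=
    Finset.sum_eq_zero (fun j hj => by
      have := Finset.mem_Icc.mp hj
      have h2 : min 2 j = 2 := by omega
      rw [h2]; push_cast; ring)
  rw [h]; push_cast; ring

lemma xv_three (ℓ : ℕ) (ψ : Fin (ℓ + 1) → ℤ) (c : ℤ) :
    xv ℓ ψ c 3 = psi' ℓ ψ 0 + c + ∑ j ∈ Finset.Icc 3 (ℓ - 1), psi' ℓ ψ j := by
  rw [xv_ge ℓ ψ c 3 (by omega)]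
  have h : ∑ j ∈ Finset.Icc 3 (ℓ - 1), (((min 3 j : ℕ) : ℤ) - 2) * psi' ℓ ψ j
      = ∑ j ∈ Finset.Icc 3 (ℓ - 1), psi' ℓ ψ j :=
    Finset.sum_congr rfl (fun j hj => by
      have := Finset.mem_Icc.mp hj
      have h3 : min 3 j = 3 := by omega
      rw [h3]; push_cast; ring)
  rw [h]; push_cast; ring

lemma key_row (ℓ : ℕ) (ψ : Fin (ℓ + 1) → ℤ) (c : ℤ) (i : ℕ) (h3 : 3 ≤ i) (hi : i ≤ ℓ - 1) :
    -(xv ℓ ψ c (i - 1)) + 2 * xv ℓ ψ c i - xv ℓ ψ c (i + 1) = psi' ℓ ψ i := by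
  rw [xv_ge ℓ ψ c (i - 1) (by omega), xv_ge ℓ ψ c i (by omega),
    xv_ge ℓ ψ c (i + 1) (by omega)]
  have e1 : ((i - 1 : ℕ) : ℤ) = (i : ℤ) - 1 := by omega
  have e2 : ((i + 1 : ℕ) : ℤ) = (i : ℤ) + 1 := by push_cast; ring
  rw [e1, e2]
  have hkey : 2 * (∑ j ∈ Finset.Icc 3 (ℓ - 1), (((min i j : ℕ) : ℤ) - 2) * psi' ℓ ψ j)
      - (∑ j ∈ Finset.Icc 3 (ℓ - 1), (((min (i - 1) j : ℕ) : ℤ) - 2) * psi' ℓ ψ j)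
      - (∑ j ∈ Finset.Icc 3 (ℓ - 1), (((min (i + 1) j : ℕ) : ℤ) - 2) * psi' ℓ ψ j)
      = psi' ℓ ψ i := by
    rw [Finset.mul_sum, ← Finset.sum_sub_distrib, ← Finset.sum_sub_distrib]
    have hmem : i ∈ Finset.Icc 3 (ℓ - 1) := Finset.mem_Icc.mpr ⟨h3, hi⟩
    rw [show psi' ℓ ψ i = ∑ j ∈ Finset.Icc 3 (ℓ - 1), (if j = i then psi' ℓ ψ j else 0) from
      by rw [Finset.sum_ite_eq' _ i (fun j => psi' ℓ ψ j), if_pos hmem]]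
    refine Finset.sum_congr rfl (fun j hj => ?_)
    have hjm := Finset.mem_Icc.mp hj
    rcases eq_or_ne j i with rfl | hne
    · rw [if_pos rfl]
      have f1 : ((min (j - 1) j : ℕ) : ℤ) = (j : ℤ) - 1 := by omega
      have f2 : ((min j j : ℕ) : ℤ) = (j : ℤ) := by omega
      have f3 : ((min (j + 1) j : ℕ) : ℤ) = (j : ℤ) := by omega
      rw [f1, f2, f3]; ring
    · rw [if_neg hne]
      have f : 2 * ((min i j : ℕ) : ℤ) - ((min (i - 1) j : ℕ) : ℤ)
          - ((min (i + 1) j : ℕ) : ℤ) = 0 := by omega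
      linear_combination (psi' ℓ ψ j) * f
  linear_combination hkey

lemma key_last (ℓ : ℕ) (ψ : Fin (ℓ + 1) → ℤ) (c : ℤ) (hℓ : 3 ≤ ℓ) :
    -2 * xv ℓ ψ c (ℓ - 1) + 2 * xv ℓ ψ c ℓ = 2 * c := by
  rw [xv_ge ℓ ψ c (ℓ - 1) (by omega), xv_ge ℓ ψ c ℓ (by omega)]
  have hsum : ∑ j ∈ Finset.Icc 3 (ℓ - 1), (((min ℓ j : ℕ) : ℤ) - 2) * psi' ℓ ψ j
      = ∑ j ∈ Finset.Icc 3 (ℓ - 1), (((min (ℓ - 1) j : ℕ) : ℤ) - 2) * psi' ℓ ψ j :=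
    Finset.sum_congr rfl (fun j hj => by
      have := Finset.mem_Icc.mp hj
      have f : ((min ℓ j : ℕ) : ℤ) = ((min (ℓ - 1) j : ℕ) : ℤ) := by omega
      rw [f])
  have e1 : ((ℓ - 1 : ℕ) : ℤ) = (ℓ : ℤ) - 1 := by omega
  rw [e1, hsum]; ring

/-- Stmt 3: In type `B_ℓ^{(1)}` (ℓ ≥ 3), a level-zero vector ψ lies in the ℤ-column-span
of the Cartan matrix iff ψ_ℓ is even. -/
theorem stmt3 (ℓ : ℕ) (hℓ : 3 ≤ ℓ)
    (A : Matrix (Fin (ℓ + 1)) (Fin (ℓ + 1)) ℤ)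
    (hA : ∀ i j : Fin (ℓ + 1), A i j =
      if i = j then 2
      else if i.val = ℓ ∧ j.val = ℓ - 1 then -2
      else if (i.val = 0 ∧ j.val = 2) ∨ (i.val = 2 ∧ j.val = 0)
           ∨ (i.val = 1 ∧ j.val = 2) ∨ (i.val = 2 ∧ j.val = 1)
           ∨ (2 ≤ i.val ∧ i.val + 1 = j.val) ∨ (2 ≤ j.val ∧ j.val + 1 = i.val) then -1
      else 0)
    (ψ : Fin (ℓ + 1) → ℤ)
    (hψ : ψ 0 + ψ 1
        + 2 * (∑ i ∈ Finset.univ.filter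
            (fun i : Fin (ℓ + 1) => 2 ≤ i.val ∧ i.val ≤ ℓ - 1), ψ i)
        + ψ (Fin.last ℓ) = 0) :
    (∃ x : Fin (ℓ + 1) → ℤ, A.mulVec x = ψ) ↔ 2 ∣ ψ (Fin.last ℓ) := by
  have hlast : (Fin.last ℓ).val = ℓ := rfl
  have hpsi : ∀ i : Fin (ℓ + 1), psi' ℓ ψ i.val = ψ i := by
    intro i
    simp [psi', i.isLt]
  constructor
  · rintro ⟨x, hx⟩
    have h := congrFun hx (Fin.last ℓ)
    have h' : ∑ j, A (Fin.last ℓ) j * x j = ψ (Fin.last ℓ) := h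
    have hrow : ∀ j : Fin (ℓ + 1), A (Fin.last ℓ) j =
        (if (j : ℕ) = ℓ - 1 then -2 else 0) + (if (j : ℕ) = ℓ then 2 else 0) := by
      intro j
      rw [hA]
      simp only [Fin.ext_iff, Fin.val_last, true_and, and_true, false_and, and_false, or_false, false_or]
      have hj := j.isLt
      split_ifs <;>
          first
          | omega
          | (simp_all only [false_and, and_false, or_false, false_or, true_and, and_true]
             omega)
    simp_rw [hrow, add_mul, ite_mul, zero_mul, neg_mul] at h'
    rw [Finset.sum_add_distrib, ind_sum (fun j => -(2 * x j)) (ℓ - 1) (by omega),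
      ind_sum (fun j => 2 * x j) ℓ (by omega)] at h'
    exact ⟨x ⟨ℓ, by omega⟩ - x ⟨ℓ - 1, by omega⟩, by linarith⟩
  · intro hdvd
    obtain ⟨c, hc⟩ := hdvd
    have hlev : psi' ℓ ψ 0 + psi' ℓ ψ 1
        + 2 * (∑ j ∈ Finset.Icc 2 (ℓ - 1), psi' ℓ ψ j) + 2 * c = 0 := by
      rw [filter_sum ℓ ψ 2 (ℓ - 1) (by omega)] at hψ
      have e0 : psi' ℓ ψ 0 = ψ 0 := hpsi 0
      have e1 : psi' ℓ ψ 1 = ψ 1 := by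
        have := hpsi 1
        rwa [show ((1 : Fin (ℓ + 1)) : ℕ) = 1 from by rw [Fin.val_one']; exact Nat.mod_eq_of_lt (by omega)] at this
      rw [e0, e1]
      linarith [hψ, hc]
    have hS : ∑ j ∈ Finset.Icc 2 (ℓ - 1), psi' ℓ ψ j
        = psi' ℓ ψ 2 + ∑ j ∈ Finset.Icc 3 (ℓ - 1), psi' ℓ ψ j := by
      rw [show Finset.Icc 2 (ℓ - 1) = insert 2 (Finset.Icc 3 (ℓ - 1)) from by
        ext n; simp only [Finset.mem_insert, Finset.mem_Icc]; omega,
        Finset.sum_insert (by simp)]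
    refine ⟨fun j => xv ℓ ψ c (j : ℕ), ?_⟩
    funext i
    show ∑ j, A i j * xv ℓ ψ c (j : ℕ) = ψ i
    have hiL := i.isLt
    rcases (show i.val = 0 ∨ i.val = 1 ∨ i.val = 2 ∨ (3 ≤ i.val ∧ i.val ≤ ℓ - 1)
        ∨ i.val = ℓ from by omega) with hi | hi | hi | ⟨hi, hi'⟩ | hi
    · -- row 0
      have hrow : ∀ j : Fin (ℓ + 1), A i j =
          (if (j : ℕ) = 0 then 2 else 0) + (if (j : ℕ) = 2 then -1 else 0) := by
        intro j
        rw [hA]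
        simp only [Fin.ext_iff, hi, true_and, and_true, false_and, and_false, or_false, false_or]
        have hj := j.isLt
        split_ifs <;>
          first
          | omega
          | (simp_all only [false_and, and_false, or_false, false_or, true_and, and_true]
             omega)
      simp_rw [hrow, add_mul, ite_mul, zero_mul, neg_mul, one_mul]
      rw [Finset.sum_add_distrib, ind_sum (fun j => 2 * xv ℓ ψ c (j : ℕ)) 0 (by omega),
        ind_sum (fun j => -(xv ℓ ψ c (j : ℕ))) 2 (by omega)]
      show 2 * xv ℓ ψ c 0 + -(xv ℓ ψ c 2) = ψ i
      rw [xv_zero, xv_two, ← hpsi i, hi]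
      ring
    · -- row 1
      have hrow : ∀ j : Fin (ℓ + 1), A i j =
          (if (j : ℕ) = 1 then 2 else 0) + (if (j : ℕ) = 2 then -1 else 0) := by
        intro j
        rw [hA]
        simp only [Fin.ext_iff, hi, true_and, and_true, false_and, and_false, or_false, false_or]
        have hj := j.isLt
        split_ifs <;>
          first
          | omega
          | (simp_all only [false_and, and_false, or_false, false_or, true_and, and_true]
             omega)
      simp_rw [hrow, add_mul, ite_mul, zero_mul, neg_mul, one_mul]
      rw [Finset.sum_add_distrib, ind_sum (fun j => 2 * xv ℓ ψ c (j : ℕ)) 1 (by omega),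
        ind_sum (fun j => -(xv ℓ ψ c (j : ℕ))) 2 (by omega)]
      show 2 * xv ℓ ψ c 1 + -(xv ℓ ψ c 2) = ψ i
      rw [xv_one, xv_two, ← hpsi i, hi]
      linarith [hlev]
    · -- row 2
      have hrow : ∀ j : Fin (ℓ + 1), A i j =
          (if (j : ℕ) = 0 then -1 else 0) + (if (j : ℕ) = 1 then -1 else 0)
          + (if (j : ℕ) = 2 then 2 else 0) + (if (j : ℕ) = 3 then -1 else 0) := by
        intro j
        rw [hA]
        simp only [Fin.ext_iff, hi, true_and, and_true, false_and, and_false, or_false, false_or]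
        have hj := j.isLt
        split_ifs <;>
          first
          | omega
          | (simp_all only [false_and, and_false, or_false, false_or, true_and, and_true]
             omega)
      simp_rw [hrow, add_mul, ite_mul, zero_mul, neg_mul, one_mul]
      rw [Finset.sum_add_distrib, Finset.sum_add_distrib, Finset.sum_add_distrib,
        ind_sum (fun j => -(xv ℓ ψ c (j : ℕ))) 0 (by omega),
        ind_sum (fun j => -(xv ℓ ψ c (j : ℕ))) 1 (by omega),
        ind_sum (fun j => 2 * xv ℓ ψ c (j : ℕ)) 2 (by omega),
        ind_sum (fun j => -(xv ℓ ψ c (j : ℕ))) 3 (by omega)]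
      show -(xv ℓ ψ c 0) + -(xv ℓ ψ c 1) + 2 * xv ℓ ψ c 2 + -(xv ℓ ψ c 3) = ψ i
      rw [xv_zero, xv_one, xv_two, xv_three, ← hpsi i, hi]
      linarith [hS]
    · -- generic row
      have hrow : ∀ j : Fin (ℓ + 1), A i j =
          (if (j : ℕ) = i.val - 1 then -1 else 0) + (if (j : ℕ) = i.val then 2 else 0)
          + (if (j : ℕ) = i.val + 1 then -1 else 0) := by
        intro j
        rw [hA]
        simp only [Fin.ext_iff, true_and, and_true, false_and, and_false, or_false, false_or]
        have hj := j.isLt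
        split_ifs <;>
          first
          | omega
          | (simp_all only [false_and, and_false, or_false, false_or, true_and, and_true]
             omega)
      simp_rw [hrow, add_mul, ite_mul, zero_mul, neg_mul, one_mul]
      rw [Finset.sum_add_distrib, Finset.sum_add_distrib,
        ind_sum (fun j => -(xv ℓ ψ c (j : ℕ))) (i.val - 1) (by omega),
        ind_sum (fun j => 2 * xv ℓ ψ c (j : ℕ)) i.val (by omega),
        ind_sum (fun j => -(xv ℓ ψ c (j : ℕ))) (i.val + 1) (by omega)]
      show -(xv ℓ ψ c (i.val - 1)) + 2 * xv ℓ ψ c i.val + -(xv ℓ ψ c (i.val + 1)) = ψ i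
      have := key_row ℓ ψ c i.val hi hi'
      have := hpsi i
      linarith
    · -- row ℓ
      have hrow : ∀ j : Fin (ℓ + 1), A i j =
          (if (j : ℕ) = ℓ - 1 then -2 else 0) + (if (j : ℕ) = ℓ then 2 else 0) := by
        intro j
        rw [hA]
        simp only [Fin.ext_iff, hi, true_and, and_true, false_and, and_false, or_false, false_or]
        have hj := j.isLt
        split_ifs <;>
          first
          | omega
          | (simp_all only [false_and, and_false, or_false, false_or, true_and, and_true]
             omega)
      simp_rw [hrow, add_mul, ite_mul, zero_mul, neg_mul]
      rw [Finset.sum_add_distrib, ind_sum (fun j => -(2 * xv ℓ ψ c (j : ℕ))) (ℓ - 1) (by omega),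
        ind_sum (fun j => 2 * xv ℓ ψ c (j : ℕ)) ℓ (by omega)]
      show -(2 * xv ℓ ψ c (ℓ - 1)) + 2 * xv ℓ ψ c ℓ = ψ i
      have hk := key_last ℓ ψ c hℓ
      have : ψ i = 2 * c := by
        rw [← hpsi i, hi, show psi' ℓ ψ ℓ = ψ (Fin.last ℓ) from hpsi (Fin.last ℓ), hc]
      linarith
end

section
/- Let A be the Cartan matrix of the affine Lie algebra A_{2ℓ-1}^{(2)} (ℓ ≥ 3), with rows/columns indexed 0,…,ℓ, entries: a_{ii}=2; a_{02}=a_{20}=a_{12}=a_{21}=-1; a_{i,i+1}=a_{i+1,i}=-1 for 2 ≤ i ≤ ℓ-2; a_{ℓ-1,ℓ}=-2 and a_{ℓ,ℓ-1}=-1; all other entries 0. A vector ψ ∈ ℤ^{ℓ+1} satisfying ψ_0 + ψ_1 + 2(ψ_2 + ⋯ + ψ_ℓ) = 0 lies in the ℤ-span of the columns of A if and only if ψ_1 + ψ_3 + ψ_5 + ⋯ (the sum of odd-indexed coordinates) is even. -/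
/-!
For `k ≥ 2` the column `k - 1` of `A` has entry `-1` in row `k` and vanishes below it, so
modulo the column lattice every vector reduces to `a e₀ + b e₁`. The dual labels `(1, 1, 2, …, 2)`
annihilate every column and every column has an even sum of odd-indexed entries; hence `a + b`
and the parity of `b` are invariants. Finally `a e₀ + b e₁` with `a + b = 0` is in the column
lattice exactly when `b` is even, because `A (e₁ - e₀) = 2 (e₁ - e₀)`.
-/

open Finset Matrix

theorem Submodule.eq_top_of_triangular {R ι : Type*} [Ring R] [Fintype ι] [LinearOrder ι]
    [DecidableEq ι] {T : Submodule R (ι → R)}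
    (h : ∀ k, ∃ v ∈ T, IsUnit (v k) ∧ ∀ i, k < i → v i = 0) : T = ⊤ := by
  have single_mem (i : ι) (c : R) (hi : Pi.single i 1 ∈ T) : Pi.single i c ∈ T := by
    simpa [← Pi.single_smul] using T.smul_mem c hi
  have hsingle (k : ι) : Pi.single k 1 ∈ T := by
    induction k using WellFoundedLT.induction with
    | _ k ih =>
    obtain ⟨v, hvT, ⟨u, hu⟩, hv⟩ := h k
    have hrest : v - Pi.single k (v k) ∈ T := by
      suffices ∑ i, Pi.single i ((v - Pi.single k (v k) : ι → R) i) ∈ T by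
        rwa [univ_sum_single] at this
      refine sum_mem fun i _ => ?_
      rcases lt_trichotomy i k with hik | rfl | hki
      · exact single_mem i _ (ih i hik)
      · simp
      · simp [hv i hki, hki.ne']
    have hk : Pi.single k (u : R) ∈ T := by
      simpa [hu] using T.sub_mem hvT hrest
    simpa [← Pi.single_smul] using T.smul_mem (↑u⁻¹ : R) hk
  rw [eq_top_iff']
  intro x
  rw [← univ_sum_single x]
  exact sum_mem fun i _ => single_mem i _ (hsingle i)

/-- The Cartan matrix of `A_{2ℓ-1}^{(2)}`, with nodes `0, …, ℓ`. -/
def cartanTwistedA (ℓ : ℕ) : Matrix (Fin (ℓ + 1)) (Fin (ℓ + 1)) ℤ :=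
  Matrix.of fun i j =>
    if i = j then 2
    else if i.val = ℓ - 1 ∧ j.val = ℓ then -2
    else if (i.val = 0 ∧ j.val = 2) ∨ (i.val = 2 ∧ j.val = 0)
         ∨ (i.val = 1 ∧ j.val = 2) ∨ (i.val = 2 ∧ j.val = 1)
         ∨ (2 ≤ i.val ∧ i.val + 1 = j.val) ∨ (2 ≤ j.val ∧ j.val + 1 = i.val) then -1
    else 0

namespace cartanTwistedA

/-- Kac's dual labels `a_i^∨` of `A_{2ℓ-1}^{(2)}`: the coefficients of the level. -/
def dualMark (i : ℕ) : ℤ := if 2 ≤ i then 2 else 1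

def oddIndicator (i : ℕ) : ℤ := (i % 2 : ℕ)

variable {ℓ : ℕ}

theorem apply_eq_neg_one_of_succ_eq {i j : Fin (ℓ + 1)} (hj : 1 ≤ j.val)
    (hij : j.val + 1 = i.val) :
    cartanTwistedA ℓ i j = -1 := by
  simp only [cartanTwistedA, of_apply, Fin.ext_iff]
  split_ifs <;> omega

theorem apply_eq_zero_of_succ_lt {i j : Fin (ℓ + 1)} (hj : 1 ≤ j.val)
    (hij : j.val + 1 < i.val) :
    cartanTwistedA ℓ i j = 0 := by
  simp only [cartanTwistedA, of_apply, Fin.ext_iff]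
  split_ifs <;> omega

theorem col_of_lt_two (hℓ : 2 ≤ ℓ) {j : Fin (ℓ + 1)} (hj : j.val < 2) :
    (cartanTwistedA ℓ).col j = (2 : ℤ) • Pi.single j 1 - Pi.single ⟨2, by omega⟩ 1 := by
  funext i
  simp only [col_apply, cartanTwistedA, of_apply, Pi.sub_apply, Pi.smul_apply, Pi.single_apply,
    Fin.ext_iff, smul_eq_mul]
  split_ifs <;> omega

theorem col_two (hℓ : 3 ≤ ℓ) :
    (cartanTwistedA ℓ).col ⟨2, by omega⟩ = (2 : ℤ) • Pi.single ⟨2, by omega⟩ 1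
      - Pi.single 0 1 - Pi.single ⟨1, by omega⟩ 1 - Pi.single ⟨3, by omega⟩ 1 := by
  funext i
  simp only [col_apply, cartanTwistedA, of_apply, Pi.sub_apply, Pi.smul_apply, Pi.single_apply,
    Fin.ext_iff, smul_eq_mul, and_true, Fin.val_zero]
  split_ifs <;> omega

theorem col_of_three_le {j : Fin (ℓ + 1)} (hj : 3 ≤ j.val) (hjℓ : j.val < ℓ) :
    (cartanTwistedA ℓ).col j = (2 : ℤ) • Pi.single j 1
      - Pi.single ⟨j.val - 1, by omega⟩ 1 - Pi.single ⟨j.val + 1, by omega⟩ 1 := by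
  funext i
  simp only [col_apply, cartanTwistedA, of_apply, Pi.sub_apply, Pi.smul_apply, Pi.single_apply,
    Fin.ext_iff, smul_eq_mul]
  split_ifs <;> omega

theorem col_last (hℓ : 3 ≤ ℓ) :
    (cartanTwistedA ℓ).col (Fin.last ℓ) =
      (2 : ℤ) • Pi.single (Fin.last ℓ) 1
        - (2 : ℤ) • Pi.single ⟨ℓ - 1, by omega⟩ 1 := by
  funext i
  simp only [col_apply, cartanTwistedA, of_apply, Pi.sub_apply, Pi.smul_apply, Pi.single_apply,
    Fin.ext_iff, smul_eq_mul, and_true, Fin.val_last]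
  split_ifs <;> omega

theorem mulVec_single_one_sub_single_zero (hℓ : 2 ≤ ℓ) :
    cartanTwistedA ℓ *ᵥ (Pi.single ⟨1, by omega⟩ 1 - Pi.single 0 1) =
      (2 : ℤ) • (Pi.single ⟨1, by omega⟩ 1 - Pi.single 0 1) := by
  rw [mulVec_sub, mulVec_single_one, mulVec_single_one, col_of_lt_two hℓ (by simp),
    col_of_lt_two hℓ (by simp)]
  abel

theorem vecMul_apply (f : ℕ → ℤ) (hℓ : 3 ≤ ℓ) (j : Fin (ℓ + 1)) :
    ((fun i : Fin (ℓ + 1) => f i) ᵥ* cartanTwistedA ℓ) j =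
      if j.val < 2 then 2 * f j.val - f 2
      else if j.val = 2 then 2 * f 2 - f 0 - f 1 - f 3
      else if j.val < ℓ then 2 * f j.val - f (j.val - 1) - f (j.val + 1)
      else 2 * f ℓ - 2 * f (ℓ - 1) := by
  obtain ⟨j, hjℓ⟩ := j
  change (fun i : Fin (ℓ + 1) => f i) ⬝ᵥ (cartanTwistedA ℓ).col ⟨j, hjℓ⟩ = _
  rcases lt_or_ge j 2 with hj | hj
  · rw [col_of_lt_two (by omega) hj]
    simp only [dotProduct_sub, dotProduct_smul, dotProduct_single, smul_eq_mul, mul_one]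
    simp [hj]
  obtain rfl | hj := hj.eq_or_lt
  · rw [col_two hℓ]
    simp only [dotProduct_sub, dotProduct_smul, dotProduct_single, smul_eq_mul, mul_one]
    simp
  obtain hjℓ | hjℓ := (Nat.le_of_lt_succ hjℓ).lt_or_eq
  · rw [col_of_three_le (j := ⟨j, _⟩) hj hjℓ]
    simp only [dotProduct_sub, dotProduct_smul, dotProduct_single, smul_eq_mul, mul_one]
    simp [hjℓ, hj.ne', hj.not_gt]
  · obtain rfl := hjℓ.symm
    rw [show (⟨ℓ, _⟩ : Fin (ℓ + 1)) = Fin.last ℓ from rfl, col_last hℓ]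
    simp only [dotProduct_sub, dotProduct_smul, dotProduct_single, smul_eq_mul, mul_one]
    simp
    omega

theorem dualMark_vecMul (hℓ : 3 ≤ ℓ) :
    (fun i : Fin (ℓ + 1) => dualMark i) ᵥ* cartanTwistedA ℓ = 0 := by
  funext j
  rw [vecMul_apply _ hℓ]
  simp only [dualMark, Pi.zero_apply]
  split_ifs <;> omega

theorem two_dvd_oddIndicator_vecMul (hℓ : 3 ≤ ℓ) (j : Fin (ℓ + 1)) :
    2 ∣ ((fun i : Fin (ℓ + 1) => oddIndicator i) ᵥ* cartanTwistedA ℓ) j := by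
  rw [vecMul_apply _ hℓ]
  simp only [oddIndicator]
  split_ifs <;> omega

theorem dualMark_dotProduct_mulVec (hℓ : 3 ≤ ℓ) (y : Fin (ℓ + 1) → ℤ) :
    (fun i : Fin (ℓ + 1) => dualMark i) ⬝ᵥ (cartanTwistedA ℓ *ᵥ y) = 0 := by
  rw [dotProduct_mulVec, dualMark_vecMul hℓ, zero_dotProduct]

theorem two_dvd_oddIndicator_dotProduct_mulVec (hℓ : 3 ≤ ℓ) (y : Fin (ℓ + 1) → ℤ) :
    2 ∣ (fun i : Fin (ℓ + 1) => oddIndicator i) ⬝ᵥ (cartanTwistedA ℓ *ᵥ y) := by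
  rw [dotProduct_mulVec]
  exact dvd_sum fun j _ => dvd_mul_of_dvd_left (two_dvd_oddIndicator_vecMul hℓ j) _

theorem range_mulVecLin_sup_span_eq_top (hℓ : 1 ≤ ℓ) :
    LinearMap.range (cartanTwistedA ℓ).mulVecLin ⊔
      Submodule.span ℤ {Pi.single 0 1, Pi.single ⟨1, by omega⟩ 1} = ⊤ := by
  have h1 : 1 < ℓ + 1 := by omega
  refine Submodule.eq_top_of_triangular fun k => ?_
  rcases lt_or_ge k.val 2 with hk | hk
  · refine ⟨Pi.single k 1, Submodule.mem_sup_right (Submodule.subset_span ?_), by simp,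
      fun i hki => by simp [hki.ne']⟩
    obtain rfl | rfl : k = 0 ∨ k = ⟨1, h1⟩ := by simp only [Fin.ext_iff, Fin.val_zero]; omega
    · exact Set.mem_insert _ _
    · exact Set.mem_insert_of_mem _ rfl
  · refine ⟨cartanTwistedA ℓ *ᵥ Pi.single ⟨k.val - 1, by omega⟩ 1,
      Submodule.mem_sup_left ⟨_, rfl⟩, ?_, fun i hki => ?_⟩
    · rw [mulVec_single_one, col_apply,
        apply_eq_neg_one_of_succ_eq (by simp; omega) (by simp; omega)]
      exact isUnit_one.neg
    · rw [mulVec_single_one, col_apply, apply_eq_zero_of_succ_lt (by simp; omega) (by simp; omega)]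

theorem exists_mulVec_add_eq (hℓ : 1 ≤ ℓ) (ψ : Fin (ℓ + 1) → ℤ) :
    ∃ (y : Fin (ℓ + 1) → ℤ) (a b : ℤ),
      cartanTwistedA ℓ *ᵥ y + (a • Pi.single 0 1 + b • Pi.single ⟨1, by omega⟩ 1) = ψ := by
  have hψ : ψ ∈ LinearMap.range (cartanTwistedA ℓ).mulVecLin ⊔
      Submodule.span ℤ {Pi.single 0 1, Pi.single ⟨1, by omega⟩ 1} := by
    simp [range_mulVecLin_sup_span_eq_top hℓ]
  obtain ⟨_, ⟨y, rfl⟩, _, hz, rfl⟩ := Submodule.mem_sup.mp hψ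
  obtain ⟨a, b, rfl⟩ := Submodule.mem_span_pair.mp hz
  exact ⟨y, a, b, rfl⟩

theorem dualMark_dotProduct (hℓ : 1 ≤ ℓ) (ψ : Fin (ℓ + 1) → ℤ) :
    (fun i : Fin (ℓ + 1) => dualMark i) ⬝ᵥ ψ =
      ψ 0 + ψ 1 + 2 * ∑ i ∈ univ.filter (fun i : Fin (ℓ + 1) => 2 ≤ i.val), ψ i := by
  obtain ⟨n, rfl⟩ : ∃ n, ℓ = n + 1 := ⟨ℓ - 1, by omega⟩
  have hsmall : univ.filter (fun i : Fin (n + 2) => ¬2 ≤ i.val) = {0, 1} := by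
    ext i
    simp only [mem_filter, mem_univ, true_and, mem_insert, mem_singleton, Fin.ext_iff,
      Fin.val_zero, Fin.val_one]
    omega
  have hlarge :
      ∀ i ∈ univ.filter (fun i : Fin (n + 2) => 2 ≤ i.val), dualMark i * ψ i = 2 * ψ i :=
    fun i hi => by simp [dualMark, (mem_filter.1 hi).2]
  rw [dotProduct, ← sum_filter_add_sum_filter_not _ (fun i : Fin (n + 2) => 2 ≤ i.val), hsmall,
    sum_pair (by simp), mul_sum, sum_congr rfl hlarge]
  simp [dualMark]
  ring

theorem oddIndicator_dotProduct (ψ : Fin (ℓ + 1) → ℤ) :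
    (fun i : Fin (ℓ + 1) => oddIndicator i) ⬝ᵥ ψ =
      ∑ i ∈ univ.filter (fun i : Fin (ℓ + 1) => i.val % 2 = 1), ψ i := by
  rw [sum_filter, dotProduct]
  refine sum_congr rfl fun i _ => ?_
  rcases Nat.mod_two_eq_zero_or_one i with h | h <;> simp [oddIndicator, h]

end cartanTwistedA

open cartanTwistedA

/-- Stmt 4: In type `A_{2ℓ-1}^{(2)}` (ℓ ≥ 3), a level-zero vector ψ lies in the ℤ-column-span
of the Cartan matrix iff the sum of its odd-indexed coordinates is even. -/
theorem stmt4 (ℓ : ℕ) (hℓ : 3 ≤ ℓ)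
    (A : Matrix (Fin (ℓ + 1)) (Fin (ℓ + 1)) ℤ)
    (hA : ∀ i j : Fin (ℓ + 1), A i j =
      if i = j then 2
      else if i.val = ℓ - 1 ∧ j.val = ℓ then -2
      else if (i.val = 0 ∧ j.val = 2) ∨ (i.val = 2 ∧ j.val = 0)
           ∨ (i.val = 1 ∧ j.val = 2) ∨ (i.val = 2 ∧ j.val = 1)
           ∨ (2 ≤ i.val ∧ i.val + 1 = j.val) ∨ (2 ≤ j.val ∧ j.val + 1 = i.val) then -1
      else 0)
    (ψ : Fin (ℓ + 1) → ℤ)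
    (hψ : ψ 0 + ψ 1
        + 2 * (∑ i ∈ Finset.univ.filter (fun i : Fin (ℓ + 1) => 2 ≤ i.val), ψ i) = 0) :
    (∃ x : Fin (ℓ + 1) → ℤ, A.mulVec x = ψ) ↔
      2 ∣ ∑ i ∈ Finset.univ.filter (fun i : Fin (ℓ + 1) => i.val % 2 = 1), ψ i := by
  have hℓ1 : 1 ≤ ℓ := by omega
  obtain rfl : A = cartanTwistedA ℓ := Matrix.ext hA
  rw [← dualMark_dotProduct hℓ1] at hψ
  rw [← oddIndicator_dotProduct]
  constructor
  · rintro ⟨x, rfl⟩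
    exact two_dvd_oddIndicator_dotProduct_mulVec hℓ x
  intro hodd
  obtain ⟨y, a, b, rfl⟩ := exists_mulVec_add_eq hℓ1 ψ
  have hab : a + b = 0 := by
    simp only [dotProduct_add, dualMark_dotProduct_mulVec hℓ, dotProduct_smul,
      dotProduct_single, smul_eq_mul] at hψ
    simpa [dualMark] using hψ
  obtain ⟨c, rfl⟩ : 2 ∣ b := by
    rw [dotProduct_add, dvd_add_right (two_dvd_oddIndicator_dotProduct_mulVec hℓ y)] at hodd
    simp only [dotProduct_add, dotProduct_smul, dotProduct_single, smul_eq_mul] at hodd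
    simpa [oddIndicator] using hodd
  refine ⟨y + c • (Pi.single ⟨1, by omega⟩ 1 - Pi.single 0 1), ?_⟩
  rw [mulVec_add, mulVec_smul, mulVec_single_one_sub_single_zero (by omega),
    show a = -(2 * c) by omega]
  module
end

section
/- Let A be the Cartan matrix of the affine Lie algebra D_ℓ^{(1)} (ℓ ≥ 5 odd), as in type D_ℓ^{(1)} (nodes 0 and 1 both attached to node 2; nodes ℓ-1 and ℓ both attached to node ℓ-2; nodes 2,…,ℓ-2 forming a path). A vector ψ ∈ ℤ^{ℓ+1} satisfying ψ_0 + ψ_1 + 2(ψ_2 + ⋯ + ψ_{ℓ-2}) + ψ_{ℓ-1} + ψ_ℓ = 0 lies in the ℤ-span of the columns of A if and only if ψ_0 - ψ_1 + 2ψ_2 + 2ψ_4 + 2ψ_6 + ⋯ + 2ψ_{ℓ-1} ≡ 0 (mod 4). -/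
/-!
The marks vector `δ = (1, 1, 2, …, 2, 1, 1)` satisfies `A δ = 0`, and the charge vector
`φ = (1, -1, 2, 0, 2, 0, …, 2, 0)` satisfies `A φ ≡ 0 (mod 4)` because `ℓ` is odd. Since `A` is
symmetric, every `ψ = A x` has level `δ ⬝ ψ = 0` and charge `φ ⬝ ψ ≡ 0 (mod 4)`.

Conversely, let `ψ` have level zero and charge divisible by `4`. The charge condition makes
`ψ₀ - ψ₁` even, so some `A x` agrees with `ψ` at nodes `0` and `1`. For `2 ≤ k < ℓ - 2`, column
`k + 1` of `A` is `-1` at node `k` and vanishes at every earlier node. Gaussian elimination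
therefore reduces the remainder, modulo the image of `A`, to a vector supported on the nodes
`ℓ - 2, ℓ - 1, ℓ`. There the level and charge conditions leave exactly the integer span of
columns `ℓ - 1` and `ℓ`.
-/

open Matrix Finset

def VanishesBelow {R : Type*} [Zero R] {n : ℕ} (k : ℕ) (v : Fin n → R) : Prop :=
  ∀ i : Fin n, i.val < k → v i = 0

theorem Fin.one_eq_mk_one {n : ℕ} (hn : 1 ≤ n) : (1 : Fin (n + 1)) = ⟨1, by omega⟩ :=
  Fin.ext <| by rw [Fin.val_one', Nat.mod_eq_of_lt (by omega)]

theorem Matrix.mulVec_apply_eq_sum_of_support {m n R : Type*} [Fintype n]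
    [NonUnitalNonAssocSemiring R] (A : Matrix m n R) (i : m) (s : Finset n)
    (hs : ∀ j ∉ s, A i j = 0) (v : n → R) :
    (A *ᵥ v) i = ∑ j ∈ s, A i j * v j :=
  (sum_subset (subset_univ s) fun j _ hj => by simp only [hs j hj, zero_mul]).symm

theorem ite_dotProduct_eq_sum_filter {ι R : Type*} [Fintype ι] [NonAssocSemiring R]
    (p : ι → Prop) [DecidablePred p] (v : ι → R) :
    (fun i => if p i then 1 else 0) ⬝ᵥ v = ∑ i ∈ univ.filter p, v i := by
  simp [dotProduct, sum_filter]

theorem Submodule.exists_sub_mem_of_unitriangular {R : Type*} [Ring R] {n : ℕ}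
    (L : Submodule R (Fin n → R)) {a b : ℕ} (hab : a ≤ b) (hbn : b ≤ n) (c : Fin n → Fin n → R)
    (hc : ∀ k : Fin n, a ≤ k.val → k.val < b → c k ∈ L ∧ c k k = 1 ∧ ∀ i < k, c k i = 0)
    (ψ : Fin n → R) (hψ : VanishesBelow a ψ) :
    ∃ w, VanishesBelow b w ∧ ψ - w ∈ L := by
  induction b, hab using Nat.le_induction with
  | base => exact ⟨ψ, hψ, by simp⟩
  | succ b hab ih =>
    obtain ⟨w, hw, hψw⟩ := ih (by omega) fun k hk hkb => hc k hk (by omega)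
    set k : Fin n := ⟨b, by omega⟩
    obtain ⟨hcL, hckk, hc_lt⟩ := hc k hab (Nat.lt_succ_self b)
    refine ⟨w - w k • c k, fun i hi => ?_, ?_⟩
    · rcases Nat.lt_succ_iff_lt_or_eq.mp hi with hi | hi
      · simp [hw i hi, hc_lt i hi]
      · obtain rfl : i = k := Fin.ext hi
        simp [hckk]
    · rw [sub_sub_eq_add_sub, add_sub_right_comm]
      exact L.add_mem hψw (L.smul_mem _ hcL)

def affineCartanD (ℓ : ℕ) : Matrix (Fin (ℓ + 1)) (Fin (ℓ + 1)) ℤ :=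
  Matrix.of fun i j =>
    if i = j then 2
    else if (i.val = 0 ∧ j.val = 2) ∨ (j.val = 0 ∧ i.val = 2)
         ∨ (i.val = 1 ∧ j.val = 2) ∨ (j.val = 1 ∧ i.val = 2)
         ∨ (2 ≤ i.val ∧ i.val + 1 = j.val ∧ j.val ≤ ℓ - 2)
         ∨ (2 ≤ j.val ∧ j.val + 1 = i.val ∧ i.val ≤ ℓ - 2)
         ∨ (i.val = ℓ - 2 ∧ j.val = ℓ - 1) ∨ (j.val = ℓ - 2 ∧ i.val = ℓ - 1)
         ∨ (i.val = ℓ - 2 ∧ j.val = ℓ) ∨ (j.val = ℓ - 2 ∧ i.val = ℓ) then -1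
    else 0

namespace AffineCartanD

variable {ℓ : ℕ}

def marks (ℓ : ℕ) (i : Fin (ℓ + 1)) : ℤ := if i.val ≤ 1 ∨ ℓ - 1 ≤ i.val then 1 else 2

def charge (ℓ : ℕ) (i : Fin (ℓ + 1)) : ℤ :=
  if i.val = 0 then 1 else if i.val = 1 then -1 else if i.val % 2 = 0 then 2 else 0

theorem isSymm : (affineCartanD ℓ).IsSymm := by
  refine IsSymm.ext fun i j => ?_
  simp only [affineCartanD, of_apply, eq_comm (a := j)]
  congr 2
  grind

@[elab_as_elim]
theorem node_cases (hℓ : 5 ≤ ℓ) {P : Fin (ℓ + 1) → Prop}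
    (zero : P ⟨0, by omega⟩) (one : P ⟨1, by omega⟩) (two : P ⟨2, by omega⟩)
    (mid : ∀ i, 3 ≤ i → (hi : i + 3 ≤ ℓ) → P ⟨i, by omega⟩)
    (sub_two : P ⟨ℓ - 2, by omega⟩) (sub_one : P ⟨ℓ - 1, ℓ.sub_lt_succ 1⟩)
    (last : P ⟨ℓ, by omega⟩)
    (i : Fin (ℓ + 1)) : P i := by
  obtain ⟨i, hi⟩ := i
  rcases (by omega : i = 0 ∨ i = 1 ∨ i = 2 ∨ (3 ≤ i ∧ i + 3 ≤ ℓ) ∨ i = ℓ - 2 ∨ i = ℓ - 1 ∨ i = ℓ)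
    with rfl | rfl | rfl | ⟨h3, hi'⟩ | rfl | rfl | rfl
  exacts [zero, one, two, mid i h3 hi', sub_two, sub_one, last]

theorem mulVec_apply_zero (hℓ : 5 ≤ ℓ) (v : Fin (ℓ + 1) → ℤ) :
    (affineCartanD ℓ *ᵥ v) ⟨0, by omega⟩ = 2 * v ⟨0, by omega⟩ - v ⟨2, by omega⟩ := by
  rw [mulVec_apply_eq_sum_of_support _ _ {⟨0, by omega⟩, ⟨2, by omega⟩} fun j hj => ?_,
    sum_pair (by simp)]
  · simp [affineCartanD, sub_eq_add_neg]
  · simp only [mem_insert, mem_singleton, Fin.ext_iff] at hj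
    simp only [affineCartanD, of_apply, Fin.ext_iff]
    rw [if_neg (by omega), if_neg (by omega)]

theorem mulVec_apply_one (hℓ : 5 ≤ ℓ) (v : Fin (ℓ + 1) → ℤ) :
    (affineCartanD ℓ *ᵥ v) ⟨1, by omega⟩ = 2 * v ⟨1, by omega⟩ - v ⟨2, by omega⟩ := by
  rw [mulVec_apply_eq_sum_of_support _ _ {⟨1, by omega⟩, ⟨2, by omega⟩} fun j hj => ?_,
    sum_pair (by simp)]
  · simp [affineCartanD, sub_eq_add_neg]
  · simp only [mem_insert, mem_singleton, Fin.ext_iff] at hj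
    simp only [affineCartanD, of_apply, Fin.ext_iff]
    rw [if_neg (by omega), if_neg (by omega)]

theorem mulVec_apply_two (hℓ : 5 ≤ ℓ) (v : Fin (ℓ + 1) → ℤ) :
    (affineCartanD ℓ *ᵥ v) ⟨2, by omega⟩ =
      -v ⟨0, by omega⟩ - v ⟨1, by omega⟩ + 2 * v ⟨2, by omega⟩ - v ⟨3, by omega⟩ := by
  rw [mulVec_apply_eq_sum_of_support _ _
      {⟨0, by omega⟩, ⟨1, by omega⟩, ⟨2, by omega⟩, ⟨3, by omega⟩} fun j hj => ?_,
    sum_insert (by simp), sum_insert (by simp), sum_pair (by simp)]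
  · simp (disch := omega) [affineCartanD, if_pos]
    ring
  · simp only [mem_insert, mem_singleton, Fin.ext_iff] at hj
    simp only [affineCartanD, of_apply, Fin.ext_iff]
    rw [if_neg (by omega), if_neg (by omega)]

theorem mulVec_apply_of_three_le (v : Fin (ℓ + 1) → ℤ) (i : ℕ) (h3 : 3 ≤ i) (hi : i + 3 ≤ ℓ) :
    (affineCartanD ℓ *ᵥ v) ⟨i, by omega⟩ =
      -v ⟨i - 1, by omega⟩ + 2 * v ⟨i, by omega⟩ - v ⟨i + 1, by omega⟩ := by
  rw [mulVec_apply_eq_sum_of_support _ _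
      {⟨i - 1, by omega⟩, ⟨i, by omega⟩, ⟨i + 1, by omega⟩} fun j hj => ?_,
    sum_insert (by simp; omega), sum_pair (by simp)]
  · simp (disch := omega) [affineCartanD, if_pos, if_neg]
    ring
  · simp only [mem_insert, mem_singleton, Fin.ext_iff] at hj
    simp only [affineCartanD, of_apply, Fin.ext_iff]
    rw [if_neg (by omega), if_neg (by omega)]

theorem mulVec_apply_sub_two (hℓ : 5 ≤ ℓ) (v : Fin (ℓ + 1) → ℤ) :
    (affineCartanD ℓ *ᵥ v) ⟨ℓ - 2, by omega⟩ = -v ⟨ℓ - 3, by omega⟩ + 2 * v ⟨ℓ - 2, by omega⟩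
      - v ⟨ℓ - 1, ℓ.sub_lt_succ 1⟩ - v ⟨ℓ, by omega⟩ := by
  rw [mulVec_apply_eq_sum_of_support _ _
      {⟨ℓ - 3, by omega⟩, ⟨ℓ - 2, by omega⟩, ⟨ℓ - 1, ℓ.sub_lt_succ 1⟩, ⟨ℓ, by omega⟩}
      fun j hj => ?_,
    sum_insert (by simp; omega), sum_insert (by simp; omega), sum_pair (by simp; omega)]
  · simp (disch := omega) [affineCartanD, if_pos, if_neg]
    ring
  · simp only [mem_insert, mem_singleton, Fin.ext_iff] at hj
    simp only [affineCartanD, of_apply, Fin.ext_iff]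
    rw [if_neg (by omega), if_neg (by omega)]

theorem mulVec_apply_sub_one (hℓ : 5 ≤ ℓ) (v : Fin (ℓ + 1) → ℤ) :
    (affineCartanD ℓ *ᵥ v) ⟨ℓ - 1, ℓ.sub_lt_succ 1⟩ =
      -v ⟨ℓ - 2, by omega⟩ + 2 * v ⟨ℓ - 1, ℓ.sub_lt_succ 1⟩ := by
  rw [mulVec_apply_eq_sum_of_support _ _ {⟨ℓ - 2, by omega⟩, ⟨ℓ - 1, ℓ.sub_lt_succ 1⟩}
      fun j hj => ?_,
    sum_pair (by simp; omega)]
  · simp (disch := omega) [affineCartanD, if_neg]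
  · simp only [mem_insert, mem_singleton, Fin.ext_iff] at hj
    simp only [affineCartanD, of_apply, Fin.ext_iff]
    rw [if_neg (by omega), if_neg (by omega)]

theorem mulVec_apply_last (hℓ : 5 ≤ ℓ) (v : Fin (ℓ + 1) → ℤ) :
    (affineCartanD ℓ *ᵥ v) ⟨ℓ, by omega⟩ = -v ⟨ℓ - 2, by omega⟩ + 2 * v ⟨ℓ, by omega⟩ := by
  rw [mulVec_apply_eq_sum_of_support _ _ {⟨ℓ - 2, by omega⟩, ⟨ℓ, by omega⟩} fun j hj => ?_,
    sum_pair (by simp; omega)]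
  · simp (disch := omega) [affineCartanD, if_neg]
  · simp only [mem_insert, mem_singleton, Fin.ext_iff] at hj
    simp only [affineCartanD, of_apply, Fin.ext_iff]
    rw [if_neg (by omega), if_neg (by omega)]

theorem mulVec_single_sub_one (hℓ : 5 ≤ ℓ) :
    affineCartanD ℓ *ᵥ Pi.single ⟨ℓ - 1, ℓ.sub_lt_succ 1⟩ 1
      = (2 : ℤ) • Pi.single ⟨ℓ - 1, ℓ.sub_lt_succ 1⟩ 1 - Pi.single ⟨ℓ - 2, by omega⟩ 1 := by
  funext i
  simp only [mulVec_single_one, col_apply, affineCartanD, of_apply, Pi.sub_apply, Pi.smul_apply,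
    Pi.single_apply, Fin.ext_iff, smul_eq_mul, and_true]
  split_ifs <;> omega

theorem mulVec_single_last (hℓ : 5 ≤ ℓ) :
    affineCartanD ℓ *ᵥ Pi.single ⟨ℓ, by omega⟩ 1
      = (2 : ℤ) • Pi.single ⟨ℓ, by omega⟩ 1 - Pi.single ⟨ℓ - 2, by omega⟩ 1 := by
  funext i
  simp only [mulVec_single_one, col_apply, affineCartanD, of_apply, Pi.sub_apply, Pi.smul_apply,
    Pi.single_apply, Fin.ext_iff, smul_eq_mul, and_true]
  split_ifs <;> omega

theorem mulVec_marks (hℓ : 5 ≤ ℓ) : affineCartanD ℓ *ᵥ marks ℓ = 0 := by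
  funext i
  refine node_cases hℓ ?_ ?_ ?_ (fun i h3 hi => ?_) ?_ ?_ ?_ i <;>
  simp (disch := omega) only [mulVec_apply_zero, mulVec_apply_one, mulVec_apply_two,
    mulVec_apply_of_three_le, mulVec_apply_sub_two, mulVec_apply_sub_one, mulVec_apply_last,
    marks, Pi.zero_apply] <;>
  split_ifs <;> omega

theorem four_dvd_mulVec_charge (hℓ : 5 ≤ ℓ) (hodd : Odd ℓ) (i : Fin (ℓ + 1)) :
    4 ∣ (affineCartanD ℓ *ᵥ charge ℓ) i := by
  have := Nat.odd_iff.mp hodd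
  refine node_cases hℓ ?_ ?_ ?_ (fun i h3 hi => ?_) ?_ ?_ ?_ i <;>
  simp (disch := omega) only [mulVec_apply_zero, mulVec_apply_one, mulVec_apply_two,
    mulVec_apply_of_three_le, mulVec_apply_sub_two, mulVec_apply_sub_one, mulVec_apply_last,
    charge, Nat.add_one_ne_zero, reduceIte] <;>
  split_ifs <;> omega

theorem marks_dotProduct_mulVec (hℓ : 5 ≤ ℓ) (x : Fin (ℓ + 1) → ℤ) :
    marks ℓ ⬝ᵥ (affineCartanD ℓ *ᵥ x) = 0 := by
  rw [dotProduct_mulVec, ← isSymm.eq, vecMul_transpose, mulVec_marks hℓ, zero_dotProduct]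

theorem four_dvd_charge_dotProduct_mulVec (hℓ : 5 ≤ ℓ) (hodd : Odd ℓ) (x : Fin (ℓ + 1) → ℤ) :
    4 ∣ charge ℓ ⬝ᵥ (affineCartanD ℓ *ᵥ x) := by
  rw [dotProduct_mulVec, ← isSymm.eq, vecMul_transpose]
  exact dvd_sum fun i _ => (four_dvd_mulVec_charge hℓ hodd i).mul_right _

theorem marks_dotProduct (hℓ : 5 ≤ ℓ) (ψ : Fin (ℓ + 1) → ℤ) :
    marks ℓ ⬝ᵥ ψ = ψ 0 + ψ 1
      + 2 * (∑ i ∈ univ.filter (fun i : Fin (ℓ + 1) => 2 ≤ i.val ∧ i.val ≤ ℓ - 2), ψ i)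
      + ψ ⟨ℓ - 1, ℓ.sub_lt_succ 1⟩ + ψ (Fin.last ℓ) := by
  have : marks ℓ = Pi.single 0 1 + Pi.single 1 1
      + (2 : ℤ) • (fun i : Fin (ℓ + 1) => if 2 ≤ i.val ∧ i.val ≤ ℓ - 2 then 1 else 0)
      + Pi.single ⟨ℓ - 1, ℓ.sub_lt_succ 1⟩ 1 + Pi.single (Fin.last ℓ) 1 := by
    funext i
    simp only [marks, Fin.one_eq_mk_one (by omega : 1 ≤ ℓ), Pi.add_apply, Pi.smul_apply,
      smul_eq_mul, Pi.single_apply, Fin.ext_iff, Fin.val_zero, Fin.val_last]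
    split_ifs <;> omega
  rw [this]
  simp only [add_dotProduct, smul_dotProduct, single_dotProduct, ite_dotProduct_eq_sum_filter]
  ring

theorem charge_dotProduct (hℓ : 1 ≤ ℓ) (ψ : Fin (ℓ + 1) → ℤ) :
    charge ℓ ⬝ᵥ ψ = ψ 0 - ψ 1
      + 2 * ∑ i ∈ univ.filter (fun i : Fin (ℓ + 1) => i.val % 2 = 0 ∧ i.val ≠ 0), ψ i := by
  have : charge ℓ = Pi.single 0 1 - Pi.single 1 1
      + (2 : ℤ) • (fun i : Fin (ℓ + 1) => if i.val % 2 = 0 ∧ i.val ≠ 0 then 1 else 0) := by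
    funext i
    simp only [charge, Fin.one_eq_mk_one hℓ, Pi.add_apply, Pi.sub_apply, Pi.smul_apply, smul_eq_mul,
      Pi.single_apply, Fin.ext_iff, Fin.val_zero]
    split_ifs <;> omega
  rw [this]
  simp only [add_dotProduct, sub_dotProduct, smul_dotProduct, single_dotProduct,
    ite_dotProduct_eq_sum_filter]
  ring

theorem exists_vanishesBelow_two_sub_mulVec (hℓ : 5 ≤ ℓ) (ψ : Fin (ℓ + 1) → ℤ)
    (h : 2 ∣ ψ 0 - ψ 1) : ∃ x, VanishesBelow 2 (ψ - affineCartanD ℓ *ᵥ x) := by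
  obtain ⟨m, hm⟩ := h
  rw [Fin.one_eq_mk_one (by omega)] at hm
  refine ⟨-(m • Pi.single ⟨1, by omega⟩ 1 + ψ 0 • Pi.single ⟨2, by omega⟩ 1), fun ⟨i, hi⟩ hi2 => ?_⟩
  interval_cases i
  · rw [Pi.sub_apply, mulVec_apply_zero hℓ]
    simp
  · rw [Pi.sub_apply, mulVec_apply_one hℓ]
    simp
    linarith

theorem exists_sub_mem_range_of_vanishesBelow_two (hℓ : 5 ≤ ℓ) (ψ : Fin (ℓ + 1) → ℤ)
    (hψ : VanishesBelow 2 ψ) :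
    ∃ w, VanishesBelow (ℓ - 2) w ∧ ψ - w ∈ LinearMap.range (affineCartanD ℓ).mulVecLin := by
  refine Submodule.exists_sub_mem_of_unitriangular _ (by omega) (by omega)
    (fun k => -(affineCartanD ℓ *ᵥ Pi.single (k + 1) 1)) (fun k hk hkℓ => ⟨?_, ?_, ?_⟩) ψ hψ
  · exact neg_mem ⟨_, rfl⟩
  all_goals have hk1 : (k + 1).val = k.val + 1 :=
    Fin.val_add_one_of_lt (Fin.lt_def.mpr (by simp only [Fin.val_last]; omega))
  · simp only [Pi.neg_apply, mulVec_single_one, col_apply, affineCartanD, of_apply, Fin.ext_iff,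
      hk1, true_and]
    rw [if_neg (by omega), if_pos (by omega), neg_neg]
  · intro i hi
    rw [Fin.lt_def] at hi
    simp only [Pi.neg_apply, mulVec_single_one, col_apply, affineCartanD, of_apply, Fin.ext_iff,
      hk1]
    rw [if_neg (by omega), if_neg (by omega), neg_zero]

theorem eq_of_vanishesBelow_sub_two (hℓ : 5 ≤ ℓ) (w : Fin (ℓ + 1) → ℤ)
    (hw : VanishesBelow (ℓ - 2) w) :
    w = w ⟨ℓ - 2, by omega⟩ • Pi.single ⟨ℓ - 2, by omega⟩ 1
      + w ⟨ℓ - 1, ℓ.sub_lt_succ 1⟩ • Pi.single ⟨ℓ - 1, ℓ.sub_lt_succ 1⟩ 1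
      + w ⟨ℓ, by omega⟩ • Pi.single ⟨ℓ, by omega⟩ 1 := by
  funext i
  simp only [Pi.add_apply, Pi.smul_apply, Pi.single_apply, smul_eq_mul, mul_ite, mul_one, mul_zero]
  rcases (by omega : i.val < ℓ - 2 ∨ i.val = ℓ - 2 ∨ i.val = ℓ - 1 ∨ i.val = ℓ) with h | h | h | h
  · simp only [hw i h, Fin.ext_iff]
    rw [if_neg (by omega), if_neg (by omega), if_neg (by omega)]
    simp
  · rw [show i = ⟨ℓ - 2, by omega⟩ from Fin.ext h]
    simp (disch := omega) [if_neg]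
  · rw [show i = ⟨ℓ - 1, ℓ.sub_lt_succ 1⟩ from Fin.ext h]
    simp (disch := omega) [if_neg]
  · rw [show i = ⟨ℓ, by omega⟩ from Fin.ext h]
    simp (disch := omega) [if_neg]

theorem exists_mulVec_eq_of_vanishesBelow_sub_two (hℓ : 5 ≤ ℓ) (hodd : Odd ℓ)
    (w : Fin (ℓ + 1) → ℤ) (hw : VanishesBelow (ℓ - 2) w) (hlevel : marks ℓ ⬝ᵥ w = 0)
    (hcharge : 4 ∣ charge ℓ ⬝ᵥ w) :
    ∃ x, affineCartanD ℓ *ᵥ x = w := by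
  have := Nat.odd_iff.mp hodd
  rw [eq_of_vanishesBelow_sub_two hℓ w hw] at hlevel hcharge ⊢
  set a := w ⟨ℓ - 2, by omega⟩
  set b := w ⟨ℓ - 1, ℓ.sub_lt_succ 1⟩
  set c := w ⟨ℓ, by omega⟩
  simp only [dotProduct_add, dotProduct_smul, dotProduct_single, smul_eq_mul, mul_one]
    at hlevel hcharge
  simp (disch := omega) only [marks, charge, if_pos, if_neg] at hlevel hcharge
  obtain ⟨s, hb⟩ : ∃ s, b = 2 * s := ⟨b / 2, by omega⟩
  have hc : c = -2 * (a + s) := by linarith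
  refine ⟨s • Pi.single ⟨ℓ - 1, ℓ.sub_lt_succ 1⟩ 1 - (a + s) • Pi.single ⟨ℓ, by omega⟩ 1, ?_⟩
  rw [mulVec_sub, mulVec_smul, mulVec_smul, mulVec_single_sub_one hℓ, mulVec_single_last hℓ, hb, hc]
  module

theorem exists_mulVec_eq_iff (hℓ : 5 ≤ ℓ) (hodd : Odd ℓ) (ψ : Fin (ℓ + 1) → ℤ)
    (hlevel : marks ℓ ⬝ᵥ ψ = 0) :
    (∃ x, affineCartanD ℓ *ᵥ x = ψ) ↔ 4 ∣ charge ℓ ⬝ᵥ ψ := by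
  refine ⟨fun ⟨x, hx⟩ => hx ▸ four_dvd_charge_dotProduct_mulVec hℓ hodd x, fun hcharge => ?_⟩
  obtain ⟨x, hx⟩ := exists_vanishesBelow_two_sub_mulVec hℓ ψ (by
    rw [charge_dotProduct (by omega)] at hcharge
    omega)
  obtain ⟨w, hw, y, hy⟩ := exists_sub_mem_range_of_vanishesBelow_two hℓ _ hx
  rw [mulVecLin_apply] at hy
  have hw_eq : w = ψ - affineCartanD ℓ *ᵥ (x + y) := by rw [mulVec_add, hy]; abel
  obtain ⟨z, hz⟩ := exists_mulVec_eq_of_vanishesBelow_sub_two hℓ hodd w hw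
    (by rw [hw_eq, dotProduct_sub, hlevel, marks_dotProduct_mulVec hℓ, sub_zero])
    (by
      rw [hw_eq, dotProduct_sub]
      exact dvd_sub hcharge (four_dvd_charge_dotProduct_mulVec hℓ hodd _))
  exact ⟨x + y + z, by rw [mulVec_add, hz, hw_eq]; abel⟩

end AffineCartanD

open AffineCartanD in
/-- Stmt 6: In type `D_ℓ^{(1)}` (ℓ ≥ 5 odd), a level-zero vector ψ lies in the ℤ-column-span
of the Cartan matrix iff `ψ_0 - ψ_1 + 2ψ_2 + 2ψ_4 + ⋯ + 2ψ_{ℓ-1} ≡ 0 (mod 4)`. -/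
theorem stmt6 (ℓ : ℕ) (hℓ : 5 ≤ ℓ) (hodd : Odd ℓ)
    (A : Matrix (Fin (ℓ + 1)) (Fin (ℓ + 1)) ℤ)
    (hA : ∀ i j : Fin (ℓ + 1), A i j =
      if i = j then 2
      else if (i.val = 0 ∧ j.val = 2) ∨ (j.val = 0 ∧ i.val = 2)
           ∨ (i.val = 1 ∧ j.val = 2) ∨ (j.val = 1 ∧ i.val = 2)
           ∨ (2 ≤ i.val ∧ i.val + 1 = j.val ∧ j.val ≤ ℓ - 2)
           ∨ (2 ≤ j.val ∧ j.val + 1 = i.val ∧ i.val ≤ ℓ - 2)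
           ∨ (i.val = ℓ - 2 ∧ j.val = ℓ - 1) ∨ (j.val = ℓ - 2 ∧ i.val = ℓ - 1)
           ∨ (i.val = ℓ - 2 ∧ j.val = ℓ) ∨ (j.val = ℓ - 2 ∧ i.val = ℓ) then -1
      else 0)
    (ψ : Fin (ℓ + 1) → ℤ)
    (hψ : ψ 0 + ψ 1
        + 2 * (∑ i ∈ Finset.univ.filter
            (fun i : Fin (ℓ + 1) => 2 ≤ i.val ∧ i.val ≤ ℓ - 2), ψ i)
        + ψ ⟨ℓ - 1, by omega⟩ + ψ (Fin.last ℓ) = 0) :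
    (∃ x : Fin (ℓ + 1) → ℤ, A.mulVec x = ψ) ↔
      4 ∣ (ψ 0 - ψ 1
        + 2 * ∑ i ∈ Finset.univ.filter
            (fun i : Fin (ℓ + 1) => i.val % 2 = 0 ∧ i.val ≠ 0), ψ i) := by
  obtain rfl : A = affineCartanD ℓ := Matrix.ext hA
  rw [← marks_dotProduct hℓ] at hψ
  rw [← charge_dotProduct (by omega)]
  exact exists_mulVec_eq_iff hℓ hodd ψ hψ
end

section
/- Let A be an (ℓ+1)×(ℓ+1) integer matrix whose Dynkin diagram is a path with all arrows pointing left, in the sense that for each i = 1,…,ℓ the (i-1)-th column of A has its i-th entry equal to -1 and its j-th entry equal to 0 for all j > i, with diagonal entries 2. Suppose d = (d_0,…,d_ℓ) is a vector of positive integers with d·A = 0 (i.e. d spans the left kernel) and d_0 ≠ 0. Then every ψ ∈ ℤ^{ℓ+1} with d_0ψ_0 + d_1ψ_1 + ⋯ + d_ℓψ_ℓ = 0 lies in the ℤ-span of the columns of A. -/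
/-!
Deleting row `0` and column `ℓ` of `A` leaves an upper triangular matrix with `-1` on the
diagonal, which is invertible over `ℤ`; so every equation except the `0`-th one can be solved
with `x ℓ = 0`. The remaining equation is then forced: both `A x` and `ψ` are orthogonal to
`d` (the first because `d` is in the left kernel of `A`), and they differ at most in
coordinate `0`, where `d 0 ≠ 0`.
-/

open Matrix

variable {R : Type*} [CommRing R]

lemma eq_of_dotProduct_eq_of_forall_ne {n : Type*} [Fintype n] [NoZeroDivisors R]
    {d v w : n → R} {i₀ : n} (hd : d i₀ ≠ 0) (hne : ∀ i, i ≠ i₀ → v i = w i)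
    (h : d ⬝ᵥ v = d ⬝ᵥ w) : v = w := by
  have hsingle : d ⬝ᵥ (v - w) = d i₀ * (v - w) i₀ :=
    Finset.sum_eq_single i₀ (fun i _ hi => by simp [hne i hi]) (by simp)
  rw [dotProduct_sub, h, sub_self, eq_comm, mul_eq_zero] at hsingle
  funext i
  by_cases hi : i = i₀
  · subst hi
    exact sub_eq_zero.1 (hsingle.resolve_left hd)
  · exact hne i hi

variable {ℓ : ℕ}

lemma isUnit_submatrix_succ_castSucc (A : Matrix (Fin (ℓ + 1)) (Fin (ℓ + 1)) R)
    (hunit : ∀ i : Fin ℓ, IsUnit (A i.succ i.castSucc))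
    (hzero : ∀ i : Fin ℓ, ∀ j : Fin (ℓ + 1), i.succ < j → A j i.castSucc = 0) :
    IsUnit (A.submatrix Fin.succ Fin.castSucc) := by
  have htri : (A.submatrix Fin.succ Fin.castSucc).IsUpperTriangular :=
    fun i j hji => hzero j i.succ (Fin.succ_lt_succ_iff.2 hji)
  rw [isUnit_iff_isUnit_det, det_of_isUpperTriangular htri, IsUnit.prod_univ_iff]
  exact hunit

lemma exists_mulVec_succ_eq (A : Matrix (Fin (ℓ + 1)) (Fin (ℓ + 1)) R)
    (hA : IsUnit (A.submatrix Fin.succ Fin.castSucc)) (ψ : Fin (ℓ + 1) → R) :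
    ∃ x : Fin (ℓ + 1) → R, ∀ j : Fin ℓ, (A *ᵥ x) j.succ = ψ j.succ := by
  obtain ⟨y, hy⟩ := mulVec_surjective_iff_isUnit.2 hA (ψ ∘ Fin.succ)
  refine ⟨Fin.snoc y 0, fun j => ?_⟩
  simpa [mulVec, dotProduct, Fin.sum_univ_castSucc] using congrFun hy j

theorem stmt10_general (ℓ : ℕ) (A : Matrix (Fin (ℓ + 1)) (Fin (ℓ + 1)) ℤ)
    (hcol : ∀ i : Fin ℓ, A i.succ i.castSucc = -1 ∧
      ∀ j : Fin (ℓ + 1), i.succ < j → A j i.castSucc = 0)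
    (d : Fin (ℓ + 1) → ℤ)
    (hker : Matrix.vecMul d A = 0) (hd0 : d 0 ≠ 0)
    (ψ : Fin (ℓ + 1) → ℤ) (hψ : ∑ i, d i * ψ i = 0) :
    ∃ x : Fin (ℓ + 1) → ℤ, A.mulVec x = ψ := by
  have hA : IsUnit (A.submatrix Fin.succ Fin.castSucc) :=
    isUnit_submatrix_succ_castSucc A (fun i => (hcol i).1 ▸ isUnit_one.neg) (fun i => (hcol i).2)
  obtain ⟨x, hx⟩ := exists_mulVec_succ_eq A hA ψ
  refine ⟨x, eq_of_dotProduct_eq_of_forall_ne hd0 (Fin.cases (absurd rfl) fun j _ => hx j) ?_⟩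
  rw [dotProduct_mulVec, hker, zero_dotProduct]
  exact hψ.symm

/-- Stmt 10: If the Dynkin diagram is a path with all arrows pointing left (column `i-1`
has a `-1` in row `i` and zeros below), `d` is a positive left-kernel vector with `d_0 ≠ 0`,
then every ψ with `∑ d_i ψ_i = 0` lies in the ℤ-column-span of `A`. -/
theorem stmt10 (ℓ : ℕ) (A : Matrix (Fin (ℓ + 1)) (Fin (ℓ + 1)) ℤ)
    (hdiag : ∀ i, A i i = 2)
    (hcol : ∀ i : Fin ℓ, A i.succ i.castSucc = -1 ∧
      ∀ j : Fin (ℓ + 1), i.succ < j → A j i.castSucc = 0)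
    (d : Fin (ℓ + 1) → ℤ) (hdpos : ∀ i, 0 < d i)
    (hker : Matrix.vecMul d A = 0) (hd0 : d 0 ≠ 0)
    (ψ : Fin (ℓ + 1) → ℤ) (hψ : ∑ i, d i * ψ i = 0) :
    ∃ x : Fin (ℓ + 1) → ℤ, A.mulVec x = ψ :=
  stmt10_general ℓ A hcol d hker hd0 ψ hψ
end

section
/- Let g be an affine Kac–Moody algebra with null root δ, Weyl group W = T ⋊ W̊ where T = {t_α : α ∈ M} acts on a weight ζ of level k by t_α(ζ) = ζ + kα - ((ζ|α) + ½(α|α)k)δ. Suppose η, ζ ∈ Λ - Q with η = t_α(ζ) - sδ for some α ∈ M and s ∈ ℤ, where α = ∑_{i=1}^ℓ (n_i d_i / a_0)α_i. Writing ζ - η = ∑_{i=0}^ℓ c_iα_i, then for each i = 1,…,ℓ one has a_0 c_i - a_i c_0 ≡ 0 (mod k d_i). -/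
/-- Stmt 15: If `η = t_α(ζ) - sδ` with `α = ∑ (n_i d_i / a_0) α_i ∈ M`, and
`ζ - η = ∑ c_i α_i`, then `a_0 c_i - a_i c_0 ≡ 0 (mod k d_i)` for each `i = 1,…,ℓ`. -/
theorem stmt15 (ℓ : ℕ) (V : Type*) [AddCommGroup V] [Module ℚ V]
    (α : Fin (ℓ + 1) → V) (hα : LinearIndependent ℚ α)
    (a : Fin (ℓ + 1) → ℤ) (ha : ∀ i, 0 < a i)
    (d : Fin ℓ → ℤ) (hd : ∀ i, 0 < d i)
    (δ : V) (hδ : δ = ∑ i, (a i : ℚ) • α i)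
    (B : V →ₗ[ℚ] V →ₗ[ℚ] ℚ)
    (k : ℤ) (hk : 0 < k)
    (η ζ : V) (n : Fin ℓ → ℤ) (s : ℤ) (αM : V)
    (hαM : αM = ∑ i : Fin ℓ, ((n i * d i : ℚ) / (a 0 : ℚ)) • α i.succ)
    (hη : η = ζ + (k : ℚ) • αM
        - (B ζ αM + (1 / 2) * B αM αM * (k : ℚ)) • δ - (s : ℚ) • δ)
    (c : Fin (ℓ + 1) → ℤ) (hc : ζ - η = ∑ i, (c i : ℚ) • α i) :
    ∀ i : Fin ℓ, (k * d i) ∣ (a 0 * c i.succ - a i.succ * c 0) := by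
  have ha0 : (a 0 : ℚ) ≠ 0 := by exact_mod_cast (ha 0).ne'
  set t : ℚ := B ζ αM + (1 / 2) * B αM αM * (k : ℚ) + (s : ℚ) with ht
  set F : Fin (ℓ + 1) → ℚ := Fin.cases ((c 0 : ℚ) - t * a 0)
      (fun j => (c j.succ : ℚ) - t * a j.succ + (k : ℚ) * ((n j * d j : ℚ) / (a 0 : ℚ))) with hF
  have key : ∑ j, F j • α j = 0 := by
    have h1 : (∑ j, (c j : ℚ) • α j) - t • (∑ j, (a j : ℚ) • α j)
        + (k : ℚ) • (∑ j : Fin ℓ, ((n j * d j : ℚ) / (a 0 : ℚ)) • α j.succ) = 0 := by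
      rw [← hc, ← hδ, ← hαM, hη, ht]; module
    rw [Finset.smul_sum, Finset.smul_sum] at h1
    rw [← h1, Fin.sum_univ_succ, Fin.sum_univ_succ (f := fun j => (c j : ℚ) • α j),
      Fin.sum_univ_succ (f := fun j => t • ((a j : ℚ) • α j))]
    simp only [hF, Fin.cases_zero, Fin.cases_succ]
    have hs : ∑ j : Fin ℓ,
        ((c j.succ : ℚ) - t * a j.succ + (k : ℚ) * ((n j * d j : ℚ) / (a 0 : ℚ))) • α j.succ
        = ∑ j : Fin ℓ, ((c j.succ : ℚ) • α j.succ - t • ((a j.succ : ℚ) • α j.succ)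
            + (k : ℚ) • (((n j * d j : ℚ) / (a 0 : ℚ)) • α j.succ)) :=
      Finset.sum_congr rfl (fun j _ => by module)
    rw [hs, Finset.sum_add_distrib, Finset.sum_sub_distrib]
    module
  have hF0 : ∀ j, F j = 0 := Fintype.linearIndependent_iff.mp hα F key
  intro i
  have h0 := hF0 0
  have hi := hF0 i.succ
  simp only [hF, Fin.cases_zero, Fin.cases_succ] at h0 hi
  have hq : (a 0 : ℚ) * c i.succ - (a i.succ : ℚ) * c 0 = -(k * (n i * d i)) := by
    have htc : t * a 0 = c 0 := by linarith
    field_simp at hi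
    linear_combination hi + (a i.succ : ℚ) * htc
  have hz : (a 0 * c i.succ - a i.succ * c 0 : ℤ) = -(k * (n i * d i)) := by
    exact_mod_cast hq
  rw [hz]
  exact ⟨-(n i), by ring⟩
end
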